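/- arXiv:2504.02806 — 3 statements merged into one kernel-verified Lean document; each statement's English description precedes it below -/
import Mathlib

section
/- Let G be a finite simple graph on n vertices, and for each vertex v let c(v) denote the order of the largest clique of G containing v (so c(v) = 1 if v is isolated). Then the number of edges of G satisfies |E(G)| ≤ ⌊(n/2) · Σ_{v ∈ V(G)} (c(v) − 1)/c(v)⌋, where the sum is over all vertices and is taken in the real numbers. -/
/-!
Induct on the vertex set `s`, giving each vertex the weight `1 - 1 / c`, and remove a maximum
clique `K` of `s`, of order `ω`; let `m = |s \ K|`. A vertex `u ∉ K` together with its
neighbours in `K` is a clique, so it has `a ≤ min (c u) ω - 1` neighbours in `K`, whence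
`2 a ≤ ω (1 - 1 / c u) + (ω - 1)`. Every vertex of `K` has `c ≥ ω`, so `K` has total weight at
least `ω - 1`. Of `(m + ω)` times the total weight, the induction hypothesis takes `m` copies of
the weight of `s \ K`, the cross edges `ω` further copies and `m (ω - 1)`, and the `ω (ω - 1)`
ordered pairs inside `K` the rest of `(m + ω) (ω - 1)`.

Of `c` only `|t| ≤ c v` for cliques `t ∋ v` is used, so the induction runs over any such `f`,
and the hypothesis for `s \ K` needs no clique orders relative to `s \ K`.
-/

open Finset SimpleGraph

/-- `cliqueOrderAt G v` is the order of the largest clique of `G` containing `v`. -/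
noncomputable def cliqueOrderAt {V : Type*} (G : SimpleGraph V) (v : V) : ℕ :=
  sSup {r : ℕ | ∃ s : Finset V, G.IsNClique r s ∧ v ∈ s}

lemma two_mul_le_mul_one_sub_inv_add {a w f : ℝ} (ha : 0 ≤ a) (haw : a + 1 ≤ w)
    (haf : a + 1 ≤ f) : 2 * a ≤ w * (1 - 1 / f) + (w - 1) := by
  have hfrac : a / (a + 1) ≤ 1 - 1 / f := by
    rw [div_le_iff₀ (by linarith), sub_mul, one_div_mul_eq_div, le_sub_iff_add_le]
    have : (a + 1) / f ≤ 1 := (div_le_one (by linarith)).2 haf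
    linarith
  have : a ≤ w * (1 - 1 / f) := calc
    a = (a + 1) * (a / (a + 1)) := by field_simp
    _ ≤ w * (1 - 1 / f) := mul_le_mul haw hfrac (by positivity) (by linarith)
  linarith

namespace SimpleGraph

variable {V : Type*} {G : SimpleGraph V}

lemma exists_isClique_subset_forall_card_le (s : Finset V) :
    ∃ K ⊆ s, G.IsClique (K : Set V) ∧ ∀ t ⊆ s, G.IsClique (t : Set V) → #t ≤ #K := by
  classical
  obtain ⟨K, hK, hmax⟩ :=
    exists_max_image (s.powerset.filter fun t : Finset V ↦ G.IsClique (t : Set V)) card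
      ⟨∅, by simp⟩
  rw [mem_filter, mem_powerset] at hK
  exact ⟨K, hK.1, hK.2, fun t hts ht ↦ hmax t (mem_filter.2 ⟨mem_powerset.2 hts, ht⟩)⟩

section Counting

variable [DecidableRel G.Adj]

lemma sum_card_filter_adj_comm (s t : Finset V) :
    ∑ u ∈ s, #{v ∈ t | G.Adj u v} = ∑ v ∈ t, #{u ∈ s | G.Adj v u} := by
  refine (sum_card_bipartiteAbove_eq_sum_card_bipartiteBelow G.Adj).trans
    (sum_congr rfl fun v _ ↦ ?_)
  simp only [bipartiteBelow, G.adj_comm]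

lemma sum_card_filter_adj_union [DecidableEq V] {s t : Finset V} (hst : Disjoint s t) :
    ∑ u ∈ s ∪ t, #{v ∈ s ∪ t | G.Adj u v} =
      ∑ u ∈ s, #{v ∈ s | G.Adj u v} + 2 * ∑ u ∈ s, #{v ∈ t | G.Adj u v} +
        ∑ u ∈ t, #{v ∈ t | G.Adj u v} := by
  have hsplit (u : V) :
      #{v ∈ s ∪ t | G.Adj u v} = #{v ∈ s | G.Adj u v} + #{v ∈ t | G.Adj u v} := by
    rw [filter_union, card_union_of_disjoint (disjoint_filter_filter hst)]
  simp only [sum_union hst, hsplit, sum_add_distrib, sum_card_filter_adj_comm t s]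
  ring

lemma card_filter_adj_add_one_le [DecidableEq V] {K : Finset V} {v : V} (hv : v ∈ K) :
    #{u ∈ K | G.Adj v u} + 1 ≤ #K := by
  have : {u ∈ K | G.Adj v u} ⊆ K.erase v := fun u hu ↦ by
    rw [mem_filter] at hu
    exact mem_erase.2 ⟨hu.2.ne', hu.1⟩
  exact (Nat.add_le_add_right (card_le_card this) 1).trans_eq (card_erase_add_one hv)

end Counting

section CliqueBound

variable {f : V → ℝ}
  (hf : ∀ t : Finset V, G.IsClique (t : Set V) → ∀ v ∈ t, (#t : ℝ) ≤ f v)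
include hf

lemma IsClique.sub_one_le_sum_one_sub_inv {K : Finset V} (hK : G.IsClique (K : Set V))
    (hne : K.Nonempty) : (#K : ℝ) - 1 ≤ ∑ v ∈ K, (1 - 1 / f v) := by
  have hpos : (0 : ℝ) < #K := Nat.cast_pos.2 hne.card_pos
  calc (#K : ℝ) - 1 = ∑ _v ∈ K, (1 - 1 / (#K : ℝ)) := by
        rw [sum_const, nsmul_eq_mul]; field_simp
    _ ≤ ∑ v ∈ K, (1 - 1 / f v) := sum_le_sum fun v hv ↦ by
        gcongr
        exact hf K hK v hv

variable [DecidableEq V] [DecidableRel G.Adj]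

lemma two_mul_sum_card_filter_adj_le {s K : Finset V} (hK : G.IsClique (K : Set V))
    (hsK : Disjoint s K) (hmax : ∀ t ⊆ s ∪ K, G.IsClique (t : Set V) → #t ≤ #K) :
    2 * (∑ u ∈ s, #{v ∈ K | G.Adj u v} : ℕ) ≤
      (#K : ℝ) * ∑ u ∈ s, (1 - 1 / f u) + #s * (#K - 1) := by
  rw [mul_sum, ← nsmul_eq_mul, ← sum_const, ← sum_add_distrib, Nat.cast_sum, mul_sum]
  refine sum_le_sum fun u hu ↦ ?_
  set C := insert u {v ∈ K | G.Adj u v}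
  have huC : u ∉ {v ∈ K | G.Adj u v} := fun h ↦
    Finset.disjoint_left.1 hsK hu (mem_filter.1 h).1
  have hC : G.IsClique (C : Set V) := by
    rw [coe_insert]
    exact (hK.subset (coe_subset.2 (filter_subset _ _))).insert fun v hv _ ↦
      (mem_filter.1 hv).2
  have hCs : C ⊆ s ∪ K :=
    insert_subset (mem_union_left _ hu) ((filter_subset _ _).trans subset_union_right)
  have hCcard : (#C : ℝ) = #{v ∈ K | G.Adj u v} + 1 := by
    rw [card_insert_of_notMem huC, Nat.cast_succ]
  refine two_mul_le_mul_one_sub_inv_add (Nat.cast_nonneg _) ?_ ?_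
  · exact hCcard ▸ Nat.cast_le.2 (hmax C hCs hC)
  · exact hCcard ▸ hf C hC u (mem_insert_self _ _)

lemma sum_card_filter_adj_le_mul_sum (s : Finset V) :
    ((∑ u ∈ s, #{v ∈ s | G.Adj u v} : ℕ) : ℝ) ≤ #s * ∑ u ∈ s, (1 - 1 / f u) := by
  induction s using Finset.strongInduction with | _ s ih =>
  obtain rfl | ⟨x, hx⟩ := s.eq_empty_or_nonempty
  · simp
  obtain ⟨K, hKs, hK, hmax⟩ := exists_isClique_subset_forall_card_le (G := G) s
  have hKne : K.Nonempty :=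
    card_pos.1 (hmax {x} (singleton_subset_iff.2 hx) (by simp))
  have hIH := ih (s \ K) (sdiff_ssubset hKs hKne)
  have hsK : Disjoint (s \ K) K := sdiff_disjoint
  rw [← sdiff_union_of_subset hKs] at hmax ⊢
  have hcross := two_mul_sum_card_filter_adj_le hf hK hsK hmax
  have hclique := hK.sub_one_le_sum_one_sub_inv hf hKne
  have hinner : ((∑ v ∈ K, #{u ∈ K | G.Adj v u} : ℕ) : ℝ) ≤ #K * (#K - 1) := by
    rw [Nat.cast_sum, ← nsmul_eq_mul, ← sum_const]
    exact sum_le_sum fun v hv ↦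
      le_sub_iff_add_le.2 (by exact_mod_cast card_filter_adj_add_one_le hv)
  have hT := mul_le_mul_of_nonneg_left hclique (by positivity : (0 : ℝ) ≤ #(s \ K) + #K)
  rw [sum_card_filter_adj_union hsK, card_union_of_disjoint hsK, sum_union hsK]
  push_cast at hIH hcross hinner ⊢
  linarith

end CliqueBound

lemma card_le_cliqueOrderAt [Fintype V] {s : Finset V} (hs : G.IsClique (s : Set V))
    {v : V} (hv : v ∈ s) : #s ≤ cliqueOrderAt G v :=
  le_csSup ⟨Fintype.card V, fun _ ⟨t, ht, _⟩ ↦ ht.card_eq ▸ card_le_univ t⟩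
    ⟨s, ⟨hs, rfl⟩, hv⟩

end SimpleGraph

theorem vertex_localized_turan_floor {V : Type*} [Fintype V] [DecidableEq V]
    (G : SimpleGraph V) [DecidableRel G.Adj] :
    (G.edgeFinset.card : ℤ) ≤
      ⌊((Fintype.card V : ℝ) / 2) *
        ∑ v : V, ((cliqueOrderAt G v : ℝ) - 1) / (cliqueOrderAt G v)⌋ := by
  have hbound := sum_card_filter_adj_le_mul_sum (s := univ)
    fun t ht v hv ↦ Nat.cast_le.2 (card_le_cliqueOrderAt (G := G) ht hv)
  have hdeg : ∑ u, #{v | G.Adj u v} = 2 * #G.edgeFinset := by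
    simp_rw [← neighborFinset_eq_filter, card_neighborFinset_eq_degree]
    exact sum_degrees_eq_twice_card_edges G
  have hterm (v : V) :
      ((cliqueOrderAt G v : ℝ) - 1) / cliqueOrderAt G v = 1 - 1 / cliqueOrderAt G v := by
    have : 1 ≤ cliqueOrderAt G v := card_le_cliqueOrderAt (by simp) (mem_singleton_self v)
    rw [sub_div, div_self (by positivity)]
  rw [hdeg, card_univ] at hbound
  rw [Int.le_floor]
  simp only [hterm]
  push_cast at hbound ⊢
  linarith
end

section
/- Let G be a finite simple graph on n vertices, and for each vertex v let c(v) denote the order of the largest clique of G containing v. Then |E(G)| ≤ (n/2) · Σ_{v ∈ V(G)} (c(v) − 1)/c(v), where the sum is taken in the real numbers. -/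
open Finset SimpleGraph

/-!
`2 |E(G)|` is the number of ordered pairs of adjacent vertices; bound that number by strong
induction on a vertex set `A` containing every edge. Take a maximum clique `K` of order
`ω ≥ 2`; it lies in `A`. Pairs inside `K` number at most `ω (ω - 1)`, and every vertex of `K` has
`c(v) = ω`, so `K` contributes exactly `ω - 1` to the weight sum. A vertex `v` outside `K` with `k`
neighbours in `K` spans a clique of order `k + 1` with them, and `k < ω` by maximality; hence
`k ≤ ω - 1` and `k ≤ ω (c(v) - 1) / c(v)`, one bound for each of the two ways a pair between `K`
and `A \ K` is counted. Pairs inside `A \ K` are handled by induction applied to `G` restricted to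
`A \ K`, in which clique orders can only drop.
-/

lemma le_mul_sub_one_div {k c w : ℝ} (hc : k + 1 ≤ c) (hw : k + 1 ≤ w) (hk : 0 ≤ k) :
    k ≤ w * ((c - 1) / c) := by
  rw [mul_div_assoc', le_div_iff₀ (by linarith)]
  -- `w ≤ (k + 1) * (w - k) ≤ c * (w - k)`
  nlinarith

lemma sub_one_div_self_le_sub_one_div_self {a b : ℝ} (ha : 0 < a) (hab : a ≤ b) :
    (a - 1) / a ≤ (b - 1) / b := by
  rw [div_le_div_iff₀ ha (ha.trans_le hab)]
  nlinarith

namespace SimpleGraph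

variable {V : Type*} {G H : SimpleGraph V} {K s t s₁ s₂ : Finset V} {u v : V} {r : ℕ}

def restrict (G : SimpleGraph V) (A : Set V) : SimpleGraph V where
  Adj u v := G.Adj u v ∧ u ∈ A ∧ v ∈ A
  symm := ⟨fun _ _ h ↦ ⟨h.1.symm, h.2.2, h.2.1⟩⟩
  loopless := ⟨fun v h ↦ G.loopless.irrefl v h.1⟩

lemma restrict_le (G : SimpleGraph V) (A : Set V) : G.restrict A ≤ G := fun _ _ h ↦ h.1

section Interedges

variable [DecidableRel G.Adj]

lemma card_interedges_eq_sum (s t : Finset V) :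
    #(G.interedges s t) = ∑ v ∈ s, #{u ∈ t | G.Adj v u} := by
  simp only [interedges_def, card_filter, sum_product]

lemma card_interedges_comm (s t : Finset V) : #(G.interedges s t) = #(G.interedges t s) :=
  have := G.symm
  Rel.card_interedges_comm s t

lemma card_interedges_union_left [DecidableEq V] (h : Disjoint s₁ s₂) (t : Finset V) :
    #(G.interedges (s₁ ∪ s₂) t) = #(G.interedges s₁ t) + #(G.interedges s₂ t) := by
  simp only [card_interedges_eq_sum, sum_union h]

lemma card_interedges_union_self [DecidableEq V] (h : Disjoint s t) :
    #(G.interedges (s ∪ t) (s ∪ t)) =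
      #(G.interedges s s) + 2 * #(G.interedges t s) + #(G.interedges t t) := by
  rw [card_interedges_union_left h, card_interedges_comm s, card_interedges_comm t,
    card_interedges_union_left h, card_interedges_union_left h, card_interedges_comm s t]
  ring

lemma card_interedges_self_le [DecidableEq V] (s : Finset V) :
    #(G.interedges s s) ≤ #s * (#s - 1) := by
  rw [Nat.mul_sub_one, ← offDiag_card]
  refine card_le_card fun e he ↦ ?_
  rw [mem_interedges_iff] at he
  exact mem_offDiag.2 ⟨he.1, he.2.1, he.2.2.ne⟩

lemma card_interedges_univ_univ [Fintype V] :
    #(G.interedges univ univ) = 2 * #G.edgeFinset := by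
  simp only [card_interedges_eq_sum, ← neighborFinset_eq_filter, card_neighborFinset_eq_degree,
    sum_degrees_eq_twice_card_edges]

lemma interedges_restrict_self (s : Finset V) [DecidableRel (G.restrict s).Adj] :
    (G.restrict s).interedges s s = G.interedges s s :=
  filter_congr fun e he ↦ by
    rw [mem_product] at he
    exact and_iff_left (b := e.1 ∈ (s : Set V) ∧ e.2 ∈ (s : Set V)) ⟨he.1, he.2⟩

end Interedges

variable [Finite V]

lemma two_le_cliqueNum_of_adj (h : G.Adj u v) : 2 ≤ G.cliqueNum := by
  classical
  have hpair : G.IsClique ({u, v} : Finset V) := by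
    rw [coe_pair]
    exact isClique_pair.2 fun _ ↦ h
  simpa [card_pair h.ne] using IsClique.card_le_cliqueNum (tc := hpair)

lemma bddAbove_cliqueOrders (G : SimpleGraph V) (v : V) :
    BddAbove {r : ℕ | ∃ s : Finset V, G.IsNClique r s ∧ v ∈ s} :=
  ⟨G.cliqueNum, fun _ ⟨_, hs, _⟩ ↦ hs.card_eq ▸ IsClique.card_le_cliqueNum (tc := hs.isClique)⟩

lemma IsNClique.le_cliqueOrderAt (hs : G.IsNClique r s) (hv : v ∈ s) : r ≤ cliqueOrderAt G v :=
  le_csSup (bddAbove_cliqueOrders G v) ⟨s, hs, hv⟩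

lemma one_le_cliqueOrderAt (G : SimpleGraph V) (v : V) : 1 ≤ cliqueOrderAt G v :=
  IsNClique.le_cliqueOrderAt (s := {v}) (by simp) (mem_singleton_self v)

lemma exists_isNClique_cliqueOrderAt (G : SimpleGraph V) (v : V) :
    ∃ s : Finset V, G.IsNClique (cliqueOrderAt G v) s ∧ v ∈ s :=
  Nat.sSup_mem (s := {r | ∃ s : Finset V, G.IsNClique r s ∧ v ∈ s})
    ⟨1, {v}, by simp, mem_singleton_self v⟩ (bddAbove_cliqueOrders G v)

lemma cliqueOrderAt_mono (h : G ≤ H) (v : V) : cliqueOrderAt G v ≤ cliqueOrderAt H v :=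
  let ⟨_, hs, hv⟩ := exists_isNClique_cliqueOrderAt G v
  (hs.mono h).le_cliqueOrderAt hv

lemma cliqueOrderAt_le_cliqueNum (G : SimpleGraph V) (v : V) :
    cliqueOrderAt G v ≤ G.cliqueNum :=
  let ⟨_, hs, _⟩ := exists_isNClique_cliqueOrderAt G v
  hs.card_eq ▸ IsClique.card_le_cliqueNum (tc := hs.isClique)

lemma IsNClique.cliqueOrderAt_eq_cliqueNum (hK : G.IsNClique G.cliqueNum K) (hv : v ∈ K) :
    cliqueOrderAt G v = G.cliqueNum :=
  (cliqueOrderAt_le_cliqueNum G v).antisymm (hK.le_cliqueOrderAt hv)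

variable [DecidableRel G.Adj]

lemma IsClique.card_filter_adj_add_one_le_cliqueOrderAt (hK : G.IsClique K) (v : V) :
    #{u ∈ K | G.Adj v u} + 1 ≤ cliqueOrderAt G v := by
  classical
  have hN : G.IsNClique #{u ∈ K | G.Adj v u} {u ∈ K | G.Adj v u} :=
    ⟨hK.subset (coe_subset.2 (filter_subset _ _)), rfl⟩
  exact (hN.insert fun _ hu ↦ (mem_filter.1 hu).2).le_cliqueOrderAt (mem_insert_self v _)

lemma IsNClique.card_filter_adj_lt_cliqueNum (hK : G.IsNClique G.cliqueNum K) (v : V) :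
    #{u ∈ K | G.Adj v u} < G.cliqueNum := by
  classical
  refine (hK.card_eq ▸ card_filter_le K _).lt_of_ne fun h ↦ ?_
  have hall : ∀ u ∈ K, G.Adj v u :=
    filter_eq_self.1 <| eq_of_subset_of_card_le (filter_subset _ _) (by rw [h, hK.card_eq])
  have hbig := hK.insert hall
  have := hbig.card_eq ▸ IsClique.card_le_cliqueNum (tc := hbig.isClique)
  omega

lemma IsNClique.card_filter_adj_le_mul (hK : G.IsNClique G.cliqueNum K) (v : V) :
    (#{u ∈ K | G.Adj v u} : ℝ) ≤
      G.cliqueNum * (((cliqueOrderAt G v : ℝ) - 1) / cliqueOrderAt G v) :=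
  le_mul_sub_one_div (by exact_mod_cast hK.isClique.card_filter_adj_add_one_le_cliqueOrderAt v)
    (by exact_mod_cast hK.card_filter_adj_lt_cliqueNum v) (Nat.cast_nonneg _)

lemma IsNClique.card_interedges_le_of_card_interedges_sdiff_le [DecidableEq V] {A : Finset V}
    (hK : G.IsNClique G.cliqueNum K) (hKA : K ⊆ A) (hω : 0 < G.cliqueNum)
    (hB : (#(G.interedges (A \ K) (A \ K)) : ℝ) ≤
      #(A \ K) * ∑ v ∈ A \ K, ((cliqueOrderAt G v : ℝ) - 1) / cliqueOrderAt G v) :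
    (#(G.interedges A A) : ℝ) ≤
      #A * ∑ v ∈ A, ((cliqueOrderAt G v : ℝ) - 1) / cliqueOrderAt G v := by
  set ω := G.cliqueNum
  set B := A \ K
  have hA : K ∪ B = A := union_sdiff_of_subset hKA
  have hdisj : Disjoint K B := disjoint_sdiff
  have hcard : (#A : ℝ) = ω + #B := by
    rw [← hA, card_union_of_disjoint hdisj, hK.card_eq, Nat.cast_add]
  have hsplit : (#(G.interedges A A) : ℝ) =
      #(G.interedges K K) + 2 * #(G.interedges B K) + #(G.interedges B B) := by
    rw [← hA, card_interedges_union_self hdisj]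
    push_cast
    ring
  have hsum : ∑ v ∈ A, ((cliqueOrderAt G v : ℝ) - 1) / cliqueOrderAt G v =
      (ω - 1) + ∑ v ∈ B, ((cliqueOrderAt G v : ℝ) - 1) / cliqueOrderAt G v := by
    rw [← hA, sum_union hdisj, sum_congr rfl fun v hv ↦ by rw [hK.cliqueOrderAt_eq_cliqueNum hv],
      sum_const, hK.card_eq, nsmul_eq_mul, mul_div_cancel₀ _ (by positivity)]
  have hKK : (#(G.interedges K K) : ℝ) ≤ ω * (ω - 1) := by
    rw [← Nat.cast_pred hω]
    exact_mod_cast hK.card_eq ▸ card_interedges_self_le (G := G) K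
  have hBK : (#(G.interedges B K) : ℝ) = ∑ v ∈ B, (#{u ∈ K | G.Adj v u} : ℝ) := by
    rw [card_interedges_eq_sum, Nat.cast_sum]
  have hBK₁ : (#(G.interedges B K) : ℝ) ≤ #B * (ω - 1) := by
    rw [hBK, ← nsmul_eq_mul, ← sum_const]
    refine sum_le_sum fun v _ ↦ ?_
    have : (#{u ∈ K | G.Adj v u} : ℝ) + 1 ≤ ω := by
      exact_mod_cast hK.card_filter_adj_lt_cliqueNum v
    linarith
  have hBK₂ : (#(G.interedges B K) : ℝ) ≤
      ω * ∑ v ∈ B, ((cliqueOrderAt G v : ℝ) - 1) / cliqueOrderAt G v := by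
    rw [hBK, mul_sum]
    exact sum_le_sum fun v _ ↦ hK.card_filter_adj_le_mul v
  rw [hsplit, hsum, hcard]
  linear_combination hKK + hBK₁ + hBK₂ + hB

theorem card_interedges_le_of_forall_adj_mem (A : Finset V) (hA : ∀ ⦃u v⦄, G.Adj u v → u ∈ A) :
    (#(G.interedges A A) : ℝ) ≤
      #A * ∑ v ∈ A, ((cliqueOrderAt G v : ℝ) - 1) / cliqueOrderAt G v := by
  classical
  induction A using Finset.strongInduction generalizing G with
  | H A ih =>
  by_cases hω : 2 ≤ G.cliqueNum
  · obtain ⟨K, hK⟩ := G.exists_isNClique_cliqueNum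
    have hKA : K ⊆ A := fun v hv ↦ by
      obtain ⟨u, hu, huv⟩ := exists_mem_ne (hK.card_eq ▸ hω) v
      exact hA (hK.isClique hv hu huv.symm)
    refine hK.card_interedges_le_of_card_interedges_sdiff_le hKA (by omega) ?_
    have hKne : K.Nonempty := card_pos.1 (by rw [hK.card_eq]; omega)
    calc (#(G.interedges (A \ K) (A \ K)) : ℝ)
        = #((G.restrict ↑(A \ K)).interedges (A \ K) (A \ K)) := by
          rw [interedges_restrict_self]
      _ ≤ #(A \ K) * ∑ v ∈ A \ K, ((cliqueOrderAt (G.restrict ↑(A \ K)) v : ℝ) - 1) /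
            cliqueOrderAt (G.restrict ↑(A \ K)) v :=
          ih _ (sdiff_ssubset hKA hKne) fun _ _ h ↦ h.2.1
      _ ≤ #(A \ K) * ∑ v ∈ A \ K, ((cliqueOrderAt G v : ℝ) - 1) / cliqueOrderAt G v := by
          refine mul_le_mul_of_nonneg_left (sum_le_sum fun v _ ↦ ?_) (Nat.cast_nonneg _)
          exact sub_one_div_self_le_sub_one_div_self
            (by exact_mod_cast one_le_cliqueOrderAt _ v)
            (by exact_mod_cast cliqueOrderAt_mono (G.restrict_le _) v)
  · have hE : G.interedges A A = ∅ := eq_empty_of_forall_notMem fun e he ↦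
      hω (two_le_cliqueNum_of_adj ((mem_interedges_iff G).1 he).2.2)
    rw [hE, card_empty, Nat.cast_zero]
    refine mul_nonneg (Nat.cast_nonneg _) (sum_nonneg fun v _ ↦ div_nonneg ?_ (Nat.cast_nonneg _))
    exact sub_nonneg.2 (by exact_mod_cast one_le_cliqueOrderAt G v)

end SimpleGraph

theorem vertex_localized_turan_weak {V : Type*} [Fintype V] [DecidableEq V]
    (G : SimpleGraph V) [DecidableRel G.Adj] :
    (G.edgeFinset.card : ℝ) ≤
      ((Fintype.card V : ℝ) / 2) *
        ∑ v : V, ((cliqueOrderAt G v : ℝ) - 1) / (cliqueOrderAt G v) := by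
  have h := G.card_interedges_le_of_forall_adj_mem univ fun _ _ _ ↦ mem_univ _
  rw [card_interedges_univ_univ, card_univ] at h
  push_cast at h
  linarith
end

section
/- Let r ≥ 1 and let G be a finite simple graph on n vertices that contains no clique on r + 1 vertices. Then |E(G)| = ⌊n²(r − 1)/(2r)⌋ holds if and only if G is isomorphic to the Turán graph T(n,r) and, writing s = n mod r, either s ≤ 2 or r·(s − 2) < s². -/
open Finset SimpleGraph

/-!
By Turán's theorem, `e(G) ≤ e(T(n,r))` with equality iff `G ≅ T(n,r)`. Writing `n = qr + s` with
`s < r`, the Turán graph satisfies `2r·e(T(n,r)) + s(r - s) = (r - 1)n²`, so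
`⌊n²(r - 1)/(2r)⌋ = e(T(n,r)) + ⌊s(r - s)/(2r)⌋`. Hence the bound is attained iff `G ≅ T(n,r)` and
`s(r - s) < 2r`, which rearranges to the stated condition on `s`.
-/

lemma Nat.two_mul_choose_two_add (m : ℕ) : 2 * m.choose 2 + m = m ^ 2 := by
  induction m with
  | zero => rfl
  | succ m ih => rw [Nat.choose_succ_succ, Nat.choose_one_right]; linear_combination ih

lemma Nat.mul_sub_lt_two_mul_iff {r s : ℕ} (hr : 0 < r) :
    s * (r - s) < 2 * r ↔ s ≤ 2 ∨ r * (s - 2) < s ^ 2 := by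
  rcases le_or_gt s 2 with hs | hs
  · simp only [hs, true_or, iff_true]
    interval_cases s <;> omega
  · rcases le_or_gt s r with hsr | hsr
    · simp only [hs.not_ge, false_or]
      zify [hsr, hs.le]
      constructor <;> intro h <;> nlinarith
    · refine iff_of_true (by simpa [Nat.sub_eq_zero_of_le hsr.le]) (Or.inr ?_)
      calc r * (s - 2) ≤ s * (s - 2) := by gcongr
        _ < s ^ 2 := by rw [sq]; gcongr; omega

namespace SimpleGraph

lemma two_mul_mul_card_edgeFinset_turanGraph_add {n r : ℕ} (hr : 0 < r) :
    2 * r * #(turanGraph n r).edgeFinset + n % r * (r - n % r) = (r - 1) * n ^ 2 := by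
  obtain ⟨s, q, hs, hn⟩ : ∃ s q, n % r = s ∧ n = s + r * q :=
    ⟨_, _, rfl, (Nat.mod_add_div n r).symm⟩
  have hsr : s < r := hs ▸ Nat.mod_lt n hr
  have hr1 : 1 ≤ r := hr
  -- the truncated division in `card_edgeFinset_turanGraph` is exact
  have hdiv : (n ^ 2 - s ^ 2) * (r - 1) = 2 * r * (r.choose 2 * q ^ 2 + s * (r - 1) * q) := by
    have hsn : s ^ 2 ≤ n ^ 2 := Nat.pow_le_pow_left (hs ▸ Nat.mod_le n r) 2
    have hr2 := Nat.two_mul_choose_two_add r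
    zify [hsn, hr1] at hr2 ⊢
    rw [hn]; push_cast; linear_combination (-(r * q ^ 2 : ℤ)) * hr2
  rw [card_edgeFinset_turanGraph, hs, hdiv, Nat.mul_div_cancel_left _ (by positivity)]
  have hs2 := Nat.two_mul_choose_two_add s
  have hr2 := Nat.two_mul_choose_two_add r
  zify [hsr.le, hr1] at hs2 hr2 ⊢
  rw [hn]; push_cast
  linear_combination (r : ℤ) * hs2 + (q ^ 2 * r : ℤ) * hr2

lemma floor_sq_mul_sub_one_div_eq_card_edgeFinset_turanGraph_add {n r : ℕ} (hr : 0 < r) :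
    ⌊(n : ℚ) ^ 2 * ((r : ℚ) - 1) / (2 * r)⌋ =
      #(turanGraph n r).edgeFinset + ((n % r * (r - n % r) / (2 * r) : ℕ) : ℤ) := by
  have h := two_mul_mul_card_edgeFinset_turanGraph_add (n := n) hr
  have hq : (n : ℚ) ^ 2 * ((r : ℚ) - 1) / (2 * r) =
      #(turanGraph n r).edgeFinset + ((n % r * (r - n % r) : ℕ) : ℚ) / ((2 * r : ℕ) : ℚ) := by
    generalize #(turanGraph n r).edgeFinset = E at h ⊢
    generalize n % r * (r - n % r) = t at h ⊢
    rw [← Nat.cast_pred hr, ← Nat.cast_pow, ← Nat.cast_mul, mul_comm, ← h]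
    push_cast
    field_simp
  rw [hq, Int.floor_natCast_add, Rat.floor_natCast_div_natCast, Int.natCast_div]

variable {V : Type*} [Fintype V] {G : SimpleGraph V} [DecidableRel G.Adj] {r : ℕ}

theorem CliqueFree.card_edgeFinset_le_turanGraph (hG : G.CliqueFree (r + 1)) :
    #G.edgeFinset ≤ #(turanGraph (Fintype.card V) r).edgeFinset :=
  card_edgeFinset_turanGraph ▸ hG.card_edgeFinset_le

theorem CliqueFree.nonempty_iso_turanGraph_iff (hr : 0 < r) (hG : G.CliqueFree (r + 1)) :
    Nonempty (G ≃g turanGraph (Fintype.card V) r) ↔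
      #G.edgeFinset = #(turanGraph (Fintype.card V) r).edgeFinset := by
  rw [← isTuranMaximal_iff_nonempty_iso_turanGraph hr]
  refine ⟨fun h => h.nonempty_iso_turanGraph.some.card_edgeFinset_eq, fun h => ⟨hG, ?_⟩⟩
  intro H _ hH
  exact h ▸ hH.card_edgeFinset_le_turanGraph

end SimpleGraph

theorem turan_floor_bound_equality_general {V : Type*} [Fintype V]
    (G : SimpleGraph V) [DecidableRel G.Adj] {r : ℕ} (hr : 1 ≤ r)
    (hfree : G.CliqueFree (r + 1)) :
    (G.edgeFinset.card : ℤ) =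
        ⌊((Fintype.card V : ℚ) ^ 2 * ((r : ℚ) - 1)) / (2 * r)⌋ ↔
      Nonempty (G ≃g turanGraph (Fintype.card V) r) ∧
        (Fintype.card V % r ≤ 2 ∨
          r * (Fintype.card V % r - 2) < (Fintype.card V % r) ^ 2) := by
  rw [floor_sq_mul_sub_one_div_eq_card_edgeFinset_turanGraph_add hr,
    hfree.nonempty_iso_turanGraph_iff hr, ← Nat.mul_sub_lt_two_mul_iff hr,
    ← Nat.div_eq_zero_iff_lt (by omega)]
  generalize Fintype.card V % r * (r - Fintype.card V % r) / (2 * r) = k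
  have hle := hfree.card_edgeFinset_le_turanGraph
  omega

theorem turan_floor_bound_equality {V : Type*} [Fintype V] [DecidableEq V]
    (G : SimpleGraph V) [DecidableRel G.Adj] {r : ℕ} (hr : 1 ≤ r)
    (hfree : G.CliqueFree (r + 1)) :
    (G.edgeFinset.card : ℤ) =
        ⌊((Fintype.card V : ℚ) ^ 2 * ((r : ℚ) - 1)) / (2 * r)⌋ ↔
      Nonempty (G ≃g turanGraph (Fintype.card V) r) ∧
        (Fintype.card V % r ≤ 2 ∨
          r * (Fintype.card V % r - 2) < (Fintype.card V % r) ^ 2) :=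
  turan_floor_bound_equality_general G hr hfree
end
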